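/- For a fair n-sided die (uniform measure on {1,...,n}), given that a non-strict run starts at index i ≥ 1, the expected length of the run is 2n/(n−1), and for a strict run it is 2n/(n+1). -/

import Mathlib

/-!
Let `q m` be the probability that `X a, …, X (a + m)` is an `r`-chain (`r` is `≤` or `<`); by
independence and uniformity it does not depend on `a`. The run length at `i` is
`∑ m, 1[X i, …, X (i + m) is a chain]`, and on the event `¬ r (X (i - 1)) (X i)` that a run
starts at `i` the `m`-th indicator has expectation `q m - q (m + 1)`: a chain from `i` with
`r (X (i - 1)) (X i)` is exactly a chain of length `m + 1` from `i - 1`. The series telescopes to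
`q 0 = 1` because `q (m + 2) ≤ q m * P (r X Y)` forces `q m → 0`. Hence the conditional expectation
is `1 / P (¬ r (X (i - 1)) (X i))`, and counting pairs gives `P (X > Y) = (n - 1) / 2n` and
`P (X ≥ Y) = (n + 1) / 2n`.
-/

open MeasureTheory ProbabilityTheory Finset
open scoped ENNReal

theorem ENNReal.iSup_natCast_eq_tsum_ite {p : ℕ → Prop} [DecidablePred p] (hp : Antitone p) :
    ⨆ (m : ℕ) (_ : p m), (m : ℝ≥0∞) = ∑' m, if p (m + 1) then 1 else 0 := by
  by_cases hall : ∀ m, p m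
  · simp [hall, ENNReal.iSup_natCast]
  push Not at hall
  have hiff : ∀ m, p m ↔ m < Nat.find hall := fun m =>
    ⟨fun h => lt_of_not_ge fun hle => Nat.find_spec hall (hp hle h),
      fun h => not_not.mp (Nat.find_min hall h)⟩
  set M := Nat.find hall
  have hsup : ⨆ (m : ℕ) (_ : p m), (m : ℝ≥0∞) = (M - 1 : ℕ) := by
    refine le_antisymm (iSup₂_le fun m hm => ?_) ?_
    · exact Nat.cast_le.mpr (by have := (hiff m).mp hm; omega)
    · rcases Nat.eq_zero_or_pos M with hM | hM
      · simp [hM]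
      · exact le_iSup₂_of_le (M - 1) ((hiff _).mpr (by omega)) le_rfl
  rw [hsup, tsum_eq_sum (s := range (M - 1)) fun m hm => if_neg fun h => by
    have := (hiff _).mp h; simp at hm; omega]
  rw [sum_congr rfl fun m hm => if_pos ((hiff _).mpr (by simp at hm; omega))]
  simp

theorem ENNReal.tsum_sub_succ_of_antitone {q : ℕ → ℝ≥0∞} (hq : Antitone q) :
    ∑' m, (q m - q (m + 1)) = q 0 - ⨅ m, q m := by
  have hpartial : ∀ K, ∑ m ∈ range K, (q m - q (m + 1)) = q 0 - q K := by
    intro K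
    induction K with
    | zero => simp
    | succ K ih =>
      rw [sum_range_succ, ih]
      exact tsub_add_tsub_cancel (hq K.zero_le) (hq K.le_succ)
  rw [ENNReal.tsum_eq_iSup_nat, ENNReal.sub_iInf]
  simp_rw [hpartial]

theorem ENNReal.iInf_eq_zero_of_le_mul_add_two {q : ℕ → ℝ≥0∞} {c : ℝ≥0∞} (h0 : q 0 ≠ ∞)
    (hc : c < 1) (hq : ∀ m, q (m + 2) ≤ q m * c) : ⨅ m, q m = 0 := by
  have hpow : ∀ k, q (2 * k) ≤ q 0 * c ^ k := by
    intro k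
    induction k with
    | zero => simp
    | succ k ih =>
      calc q (2 * (k + 1)) = q (2 * k + 2) := rfl
        _ ≤ q (2 * k) * c := hq _
        _ ≤ q 0 * c ^ k * c := by gcongr
        _ = q 0 * c ^ (k + 1) := by ring
  have hlim := ENNReal.Tendsto.const_mul (ENNReal.tendsto_pow_atTop_nhds_zero_of_lt_one hc)
    (Or.inr h0)
  rw [mul_zero] at hlim
  exact le_antisymm (ge_of_tendsto' hlim fun k => (iInf_le q (2 * k)).trans (hpow k)) bot_le

section Runs

variable {Ω α : Type*} (r : α → α → Prop)

noncomputable def runLength (x : ℕ → α) (i : ℕ) : ℝ≥0∞ :=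
  ⨆ (m : ℕ) (_ : ∀ j k, i ≤ j → j < k → k < i + m → r (x j) (x k)), (m : ℝ≥0∞)

def chainEvent (X : ℕ → Ω → α) (a m : ℕ) : Set Ω :=
  {ω | ∀ t < m, r (X (a + t) ω) (X (a + t + 1) ω)}

variable {r} {X : ℕ → Ω → α}

theorem chainEvent_zero (a : ℕ) : chainEvent r X a 0 = Set.univ := by
  simp [chainEvent]

theorem chainEvent_antitone (a : ℕ) : Antitone (chainEvent r X a) :=
  fun _ _ hmm' _ hω t ht => hω t (ht.trans_le hmm')

theorem chainEvent_succ_inter (a m : ℕ) :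
    chainEvent r X (a + 1) m ∩ {ω | r (X a ω) (X (a + 1) ω)} = chainEvent r X a (m + 1) := by
  ext ω
  simp only [chainEvent, Set.mem_inter_iff, Set.mem_ofPred_eq, Nat.forall_lt_succ_left,
    add_zero, add_assoc, add_comm 1]
  exact and_comm

theorem rel_of_mem_chainEvent [IsTrans α r] {ω : Ω} {i m : ℕ} (h : ω ∈ chainEvent r X i m)
    {j k : ℕ} (hij : i ≤ j) (hjk : j < k) (hk : k ≤ i + m) : r (X j ω) (X k ω) := by
  have step : ∀ t, i ≤ t → t < i + m → r (X t ω) (X (t + 1) ω) := fun t hit htm => by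
    simpa [Nat.add_sub_cancel' hit] using h (t - i) (by omega)
  induction k, hjk using Nat.le_induction with
  | base => exact step j hij (by omega)
  | succ k hjk ih => exact _root_.trans (ih (by omega)) (step k (by omega) (by omega))

theorem runLength_eq_tsum_indicator [IsTrans α r] (ω : Ω) (i : ℕ) :
    runLength r (X · ω) i = ∑' m, (chainEvent r X i m).indicator 1 ω := by
  classical
  have hiff : ∀ m, (∀ j k, i ≤ j → j < k → k < i + (m + 1) → r (X j ω) (X k ω)) ↔
      ω ∈ chainEvent r X i m := fun m =>
    ⟨fun h t ht => h _ _ (by omega) (by omega) (by omega),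
      fun h j k hij hjk hk => rel_of_mem_chainEvent h hij hjk (by omega)⟩
  rw [runLength, ENNReal.iSup_natCast_eq_tsum_ite]
  · simp only [Set.indicator_apply, Pi.one_apply, hiff]
  · intro m m' hmm' h j k hij hjk hk
    exact h j k hij hjk (by omega)

theorem measurableSet_chainEvent [MeasurableSpace Ω] [MeasurableSpace α]
    (hX : ∀ i, Measurable (X i)) (hr : MeasurableSet {p : α × α | r p.1 p.2}) (a m : ℕ) :
    MeasurableSet (chainEvent r X a m) := by
  simp only [chainEvent, Set.ofPred_forall]
  exact .iInter fun t => .iInter fun _ => hr.preimage ((hX _).prodMk (hX _))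

theorem setLIntegral_runLength_eq_one [MeasurableSpace Ω] [MeasurableSpace α] {P : Measure Ω}
    [IsProbabilityMeasure P] [IsTrans α r] (hX : ∀ i, Measurable (X i))
    (hr : MeasurableSet {p : α × α | r p.1 p.2}) {q : ℕ → ℝ≥0∞}
    (hq : ∀ a m, P (chainEvent r X a m) = q m) (hq_inf : ⨅ m, q m = 0) {i : ℕ} (hi : 1 ≤ i) :
    ∫⁻ ω in {ω | ¬ r (X (i - 1) ω) (X i ω)}, runLength r (X · ω) i ∂P = 1 := by
  obtain ⟨a, rfl⟩ : ∃ a, i = a + 1 := ⟨i - 1, by omega⟩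
  rw [add_tsub_cancel_right]
  have hE := measurableSet_chainEvent hX hr
  have hq_anti : Antitone q := fun m m' hmm' => by
    rw [← hq a m, ← hq a m']
    exact measure_mono (chainEvent_antitone a hmm')
  have hq_zero : q 0 = 1 := by rw [← hq a 0, chainEvent_zero, measure_univ]
  have hterm : ∀ m, P (chainEvent r X (a + 1) m ∩ {ω | ¬ r (X a ω) (X (a + 1) ω)}) =
      q m - q (m + 1) := fun m => by
    have hstart : MeasurableSet {ω | r (X a ω) (X (a + 1) ω)} :=
      hr.preimage ((hX _).prodMk (hX _))
    rw [← Set.compl_ofPred, ← Set.sdiff_eq, ← Set.sdiff_self_inter,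
      measure_sdiff Set.inter_subset_left ((hE _ _).inter hstart).nullMeasurableSet
        (measure_ne_top _ _), chainEvent_succ_inter, hq, hq]
  calc ∫⁻ ω in {ω | ¬ r (X a ω) (X (a + 1) ω)}, runLength r (X · ω) (a + 1) ∂P
      = ∑' m, ∫⁻ ω in {ω | ¬ r (X a ω) (X (a + 1) ω)},
          (chainEvent r X (a + 1) m).indicator 1 ω ∂P := by
        simp_rw [runLength_eq_tsum_indicator]
        exact lintegral_tsum fun m => (measurable_const.indicator (hE _ m)).aemeasurable
    _ = ∑' m, (q m - q (m + 1)) := by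
        simp_rw [lintegral_indicator_one (hE _ _), Measure.restrict_apply (hE _ _), hterm]
    _ = 1 := by rw [ENNReal.tsum_sub_succ_of_antitone hq_anti, hq_inf, hq_zero, tsub_zero]

end Runs

theorem measure_preimage_finset_eq_card_mul {Ω β : Type*} [MeasurableSpace Ω]
    [MeasurableSpace β] [MeasurableSingletonClass β] {P : Measure Ω} {f : Ω → β}
    (hf : Measurable f) {c : ℝ≥0∞} (hc : ∀ y, P (f ⁻¹' {y}) = c) (S : Finset β) :
    P (f ⁻¹' S) = #S * c := by
  rw [← sum_measure_preimage_singleton S fun y _ => hf (measurableSet_singleton y)]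
  simp [hc]

section ChainCount

variable {α : Type*} [Fintype α] (r : α → α → Prop) [DecidableRel r]

def chainCount (m : ℕ) : ℕ :=
  #{f : Fin (m + 1) → α | ∀ t : Fin m, r (f t.castSucc) (f t.succ)}

theorem chainCount_add_two_le (m : ℕ) :
    chainCount r (m + 2) ≤ chainCount r m * #{p : α × α | r p.1 p.2} := by
  rw [chainCount, chainCount, ← card_product]
  refine card_le_card_of_injOn
    (fun f => (Fin.init (Fin.init f), (Fin.init f (Fin.last _), f (Fin.last _)))) ?_ ?_
  · intro f hf
    simp only [coe_filter, mem_univ, true_and, Set.mem_ofPred_eq, coe_product,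
      Set.mem_prod] at hf ⊢
    refine ⟨fun t => ?_, ?_⟩
    · simpa [Fin.init] using hf t.castSucc.castSucc
    · simpa [Fin.init] using hf (Fin.last _)
  · intro f _ g _ hfg
    simp only [Prod.mk.injEq] at hfg
    rw [← Fin.snoc_init_self f, ← Fin.snoc_init_self g, ← Fin.snoc_init_self (Fin.init f),
      ← Fin.snoc_init_self (Fin.init g), hfg.1, hfg.2.1, hfg.2.2]

theorem card_rel_lt_sq {x y : α} (hxy : ¬ r x y) :
    #{p : α × α | r p.1 p.2} < Fintype.card α ^ 2 := by
  rw [sq, ← Fintype.card_prod, ← card_univ]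
  exact card_lt_card (filter_ssubset.mpr ⟨(x, y), mem_univ _, hxy⟩)

end ChainCount

section Uniform

variable {Ω α : Type*} [MeasurableSpace Ω] [Fintype α] [MeasurableSpace α]
  [MeasurableSingletonClass α] {P : Measure Ω} {X : ℕ → Ω → α}

theorem measure_tuple_mem (hX : ∀ i, Measurable (X i)) (hindep : iIndepFun X P)
    (hunif : ∀ i a, P (X i ⁻¹' {a}) = (Fintype.card α : ℝ≥0∞)⁻¹)
    {ι : Type*} [Fintype ι] {j : ι → ℕ} (hj : j.Injective) (S : Finset (ι → α)) :
    P ((fun ω t => X (j t) ω) ⁻¹' S) = #S * (Fintype.card α : ℝ≥0∞)⁻¹ ^ Fintype.card ι := by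
  refine measure_preimage_finset_eq_card_mul (measurable_pi_lambda _ fun t => hX (j t))
    (fun f => ?_) S
  have hfiber : (fun ω t => X (j t) ω) ⁻¹' {f} = ⋂ t ∈ (univ : Finset ι), X (j t) ⁻¹' {f t} := by
    ext ω
    simp [funext_iff]
  rw [hfiber, (hindep.precomp hj).measure_inter_preimage_eq_mul _
    fun t _ => measurableSet_singleton _]
  simp [hunif]

theorem measure_setOf_rel (hX : ∀ i, Measurable (X i)) (hindep : iIndepFun X P)
    (hunif : ∀ i a, P (X i ⁻¹' {a}) = (Fintype.card α : ℝ≥0∞)⁻¹) (s : α → α → Prop)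
    [DecidableRel s] {a b : ℕ} (hab : a ≠ b) :
    P {ω | s (X a ω) (X b ω)} = #{p : α × α | s p.1 p.2} * (Fintype.card α : ℝ≥0∞)⁻¹ ^ 2 := by
  have hset : {ω | s (X a ω) (X b ω)} =
      (fun ω => (X a ω, X b ω)) ⁻¹' ↑(univ.filter fun p : α × α => s p.1 p.2) := by
    ext ω
    simp
  refine hset ▸ measure_preimage_finset_eq_card_mul ((hX a).prodMk (hX b)) (fun y => ?_) _
  rw [← Set.singleton_prod_singleton, Set.mk_preimage_prod,
    (hindep.indepFun hab).measure_inter_preimage_eq_mul _ _ (measurableSet_singleton _)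
      (measurableSet_singleton _), hunif, hunif, sq]

theorem measure_chainEvent (r : α → α → Prop) [DecidableRel r] (hX : ∀ i, Measurable (X i))
    (hindep : iIndepFun X P)
    (hunif : ∀ i a, P (X i ⁻¹' {a}) = (Fintype.card α : ℝ≥0∞)⁻¹) (a m : ℕ) :
    P (chainEvent r X a m) = chainCount r m * (Fintype.card α : ℝ≥0∞)⁻¹ ^ (m + 1) := by
  have hj : (fun t : Fin (m + 1) => a + t).Injective :=
    (add_right_injective a).comp Fin.val_injective
  have hset : chainEvent r X a m = (fun ω (t : Fin (m + 1)) => X (a + t) ω) ⁻¹'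
      ↑(univ.filter fun f : Fin (m + 1) → α => ∀ t : Fin m, r (f t.castSucc) (f t.succ)) := by
    ext ω
    simp only [chainEvent, Set.mem_ofPred_eq, Set.mem_preimage, coe_filter, mem_univ, true_and,
      Fin.val_castSucc, Fin.val_succ, add_assoc]
    exact ⟨fun h t => h t t.isLt, fun h t ht => h ⟨t, ht⟩⟩
  rw [hset, measure_tuple_mem hX hindep hunif hj, chainCount, Fintype.card_fin]

theorem setLIntegral_runLength_eq_one_of_uniform [IsProbabilityMeasure P]
    (r : α → α → Prop) [IsTrans α r] (hX : ∀ i, Measurable (X i)) (hindep : iIndepFun X P)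
    (hunif : ∀ i a, P (X i ⁻¹' {a}) = (Fintype.card α : ℝ≥0∞)⁻¹) {x y : α} (hxy : ¬ r x y)
    {i : ℕ} (hi : 1 ≤ i) :
    ∫⁻ ω in {ω | ¬ r (X (i - 1) ω) (X i ω)}, runLength r (X · ω) i ∂P = 1 := by
  classical
  have : Nonempty α := ⟨x⟩
  have hn : (Fintype.card α : ℝ≥0∞) ≠ 0 := Nat.cast_ne_zero.mpr Fintype.card_ne_zero
  have hc : #{p : α × α | r p.1 p.2} * (Fintype.card α : ℝ≥0∞)⁻¹ ^ 2 < 1 := by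
    rw [← ENNReal.inv_pow, ← div_eq_mul_inv, ENNReal.div_lt_iff (by simp [hn]) (by simp), one_mul]
    exact_mod_cast card_rel_lt_sq r hxy
  have hdecay : ∀ m, chainCount r (m + 2) * (Fintype.card α : ℝ≥0∞)⁻¹ ^ (m + 2 + 1) ≤
      chainCount r m * (Fintype.card α : ℝ≥0∞)⁻¹ ^ (m + 1) *
        (#{p : α × α | r p.1 p.2} * (Fintype.card α : ℝ≥0∞)⁻¹ ^ 2) := fun m =>
    calc _ ≤ (chainCount r m * #{p : α × α | r p.1 p.2} : ℕ) *
          (Fintype.card α : ℝ≥0∞)⁻¹ ^ (m + 2 + 1) := by gcongr; exact chainCount_add_two_le r m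
      _ = _ := by push_cast; ring
  have hq := measure_chainEvent r hX hindep hunif
  refine setLIntegral_runLength_eq_one hX (Set.toFinite _).measurableSet hq
    (ENNReal.iInf_eq_zero_of_le_mul_add_two ?_ hc hdecay) hi
  rw [← hq 0 0]
  exact measure_ne_top _ _

end Uniform

section LinearOrder

variable {α : Type*} [Fintype α] [LinearOrder α]

theorem two_mul_card_lt_add_card :
    2 * #{p : α × α | p.1 < p.2} + Fintype.card α = Fintype.card α ^ 2 := by
  have hswap : #{p : α × α | p.2 < p.1} = #{p : α × α | p.1 < p.2} :=
    card_equiv (Equiv.prodComm α α) fun p => by simp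
  have hdiag : #{p : α × α | p.1 = p.2} = Fintype.card α := by
    have : (univ : Finset α).diag = ({p : α × α | p.1 = p.2} : Finset (α × α)) := by
      ext p
      simp [mem_diag]
    rw [← this, diag_card, card_univ]
  have hle :
      #{p : α × α | p.1 ≤ p.2} = #{p : α × α | p.1 < p.2} + #{p : α × α | p.1 = p.2} := by
    rw [← card_union_of_disjoint (disjoint_filter.mpr fun p _ h => h.ne), ← filter_or]
    simp_rw [le_iff_lt_or_eq]
  have htot := card_filter_add_card_filter_not (s := (univ : Finset (α × α)))
    (p := fun p => p.1 ≤ p.2)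
  simp only [not_le, card_univ, Fintype.card_prod] at htot
  rw [hle, hswap, hdiag] at htot
  rw [sq, ← htot]
  ring

theorem two_mul_card_not_le :
    2 * #{p : α × α | ¬ p.1 ≤ p.2} = Fintype.card α * (Fintype.card α - 1) := by
  have hswap : #{p : α × α | ¬ p.1 ≤ p.2} = #{p : α × α | p.1 < p.2} :=
    card_equiv (Equiv.prodComm α α) fun p => by simp
  rw [hswap, Nat.mul_sub_one, ← sq, ← two_mul_card_lt_add_card, Nat.add_sub_cancel]

theorem two_mul_card_not_lt :
    2 * #{p : α × α | ¬ p.1 < p.2} = Fintype.card α * (Fintype.card α + 1) := by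
  have htot := card_filter_add_card_filter_not (s := (univ : Finset (α × α)))
    (p := fun p => p.1 < p.2)
  rw [card_univ, Fintype.card_prod] at htot
  have := two_mul_card_lt_add_card (α := α)
  rw [sq] at this
  linarith

end LinearOrder

theorem ENNReal.one_div_natCast_mul_inv_sq {n c d : ℕ} (hn : n ≠ 0) (hd : d ≠ 0)
    (h : 2 * c = n * d) : 1 / (c * (n : ℝ≥0∞)⁻¹ ^ 2) = 2 * n / d := by
  have hc : c ≠ 0 := by rintro rfl; simp_all
  rw [← ENNReal.inv_pow, ← div_eq_mul_inv, one_div, ENNReal.inv_div (by simp) (by simp [hn]),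
    ENNReal.div_eq_div_iff (by simpa) (by simp) (by simpa) (by simp)]
  have : d * n ^ 2 = c * (2 * n) :=
    calc d * n ^ 2 = n * (n * d) := by ring
      _ = c * (2 * n) := by rw [← h]; ring
  exact_mod_cast this

theorem stmt14_general {Ω : Type*} [MeasurableSpace Ω] (P : Measure Ω) [IsProbabilityMeasure P]
    (n : ℕ) (hn : 2 ≤ n) (μ : Measure (Fin n))
    (hunif : ∀ k : Fin n, μ {k} = (n : ENNReal)⁻¹)
    (X : ℕ → Ω → Fin n) (hmeas : ∀ i, Measurable (X i))
    (hindep : iIndepFun X P)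
    (hdist : ∀ i, P.map (X i) = μ)
    (i : ℕ) (hi : 1 ≤ i) :
    ((∫⁻ ω in {ω | ¬ X (i - 1) ω ≤ X i ω},
        (⨆ (m : ℕ) (_ : ∀ j k : ℕ, i ≤ j → j < k → k < i + m → X j ω ≤ X k ω),
          (m : ENNReal)) ∂P)
      / P {ω | ¬ X (i - 1) ω ≤ X i ω}
      = (2 * n : ENNReal) / ((n : ENNReal) - 1))
    ∧ ((∫⁻ ω in {ω | ¬ X (i - 1) ω < X i ω},
        (⨆ (m : ℕ) (_ : ∀ j k : ℕ, i ≤ j → j < k → k < i + m → X j ω < X k ω),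
          (m : ENNReal)) ∂P)
      / P {ω | ¬ X (i - 1) ω < X i ω}
      = (2 * n : ENNReal) / ((n : ENNReal) + 1)) := by
  have hunif' : ∀ i (a : Fin n), P (X i ⁻¹' {a}) = (Fintype.card (Fin n) : ℝ≥0∞)⁻¹ :=
    fun i a => by
      rw [← Measure.map_apply (hmeas i) (measurableSet_singleton a), hdist, hunif,
        Fintype.card_fin]
  have hpred : i - 1 ≠ i := by omega
  have hnot_le : ¬ (⟨1, hn⟩ : Fin n) ≤ ⟨0, by omega⟩ := by simp [Fin.le_def]
  have hnot_lt : ¬ (⟨1, hn⟩ : Fin n) < ⟨0, by omega⟩ := by simp [Fin.lt_def]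
  have hle := setLIntegral_runLength_eq_one_of_uniform _ hmeas hindep hunif' hnot_le hi
  have hlt := setLIntegral_runLength_eq_one_of_uniform _ hmeas hindep hunif' hnot_lt hi
  unfold runLength at hle hlt
  constructor
  · rw [hle, measure_setOf_rel hmeas hindep hunif' (fun x y => ¬ x ≤ y) hpred]
    have := ENNReal.one_div_natCast_mul_inv_sq (by simp; omega) (by simp; omega)
      (two_mul_card_not_le (α := Fin n))
    simpa [ENNReal.natCast_sub] using this
  · rw [hlt, measure_setOf_rel hmeas hindep hunif' (fun x y => ¬ x < y) hpred]
    have := ENNReal.one_div_natCast_mul_inv_sq (by simp; omega) (by simp)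
      (two_mul_card_not_lt (α := Fin n))
    simpa using this

/-- for i.i.d. rolls of a fair n-sided die (uniform on `Fin n`, n ≥ 2) and i ≥ 1,
the conditional expected length of the non-strict run starting at i (given X_{i−1} ≰ Xᵢ) is
2n/(n−1), and of the strict run starting at i (given X_{i−1} ≮ Xᵢ) is 2n/(n+1). -/
theorem stmt14 {Ω : Type*} [MeasurableSpace Ω] (P : Measure Ω) [IsProbabilityMeasure P]
    (n : ℕ) (hn : 2 ≤ n) (μ : Measure (Fin n)) [IsProbabilityMeasure μ]
    (hunif : ∀ k : Fin n, μ {k} = (n : ENNReal)⁻¹)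
    (X : ℕ → Ω → Fin n) (hmeas : ∀ i, Measurable (X i))
    (hindep : iIndepFun X P)
    (hdist : ∀ i, P.map (X i) = μ)
    (i : ℕ) (hi : 1 ≤ i) :
    ((∫⁻ ω in {ω | ¬ X (i - 1) ω ≤ X i ω},
        (⨆ (m : ℕ) (_ : ∀ j k : ℕ, i ≤ j → j < k → k < i + m → X j ω ≤ X k ω),
          (m : ENNReal)) ∂P)
      / P {ω | ¬ X (i - 1) ω ≤ X i ω}
      = (2 * n : ENNReal) / ((n : ENNReal) - 1))
    ∧ ((∫⁻ ω in {ω | ¬ X (i - 1) ω < X i ω},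
        (⨆ (m : ℕ) (_ : ∀ j k : ℕ, i ≤ j → j < k → k < i + m → X j ω < X k ω),
          (m : ENNReal)) ∂P)
      / P {ω | ¬ X (i - 1) ω < X i ω}
      = (2 * n : ENNReal) / ((n : ENNReal) + 1)) :=
  stmt14_general P n hn μ hunif X hmeas hindep hdist i hi
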